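/- arXiv:2104.11788 — 3 statements merged into one kernel-verified Lean document; each statement's English description precedes it below -/
import Mathlib

section
/- Let P be a k-uniform tight path on n vertices with n > (k² + k - 2)/2 and k ≥ 2, and let W be a set of vertices of P such that every edge e of P satisfies |e ∩ W| > (k + 1)/2. Then |W| > n/2. -/
/-- Edge set of the k-uniform tight path on n vertices, with vertex ordering v 0, ..., v (n-1):
the edges are the images of all length-k intervals of consecutive indices. -/
def tightPathEdges {V : Type*} [DecidableEq V] (v : ℕ → V) (n k : ℕ) : Finset (Finset V) :=
  (Finset.range (n - k + 1)).image fun i => (Finset.Ico i (i + k)).image v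

/-!
Double counting over the `n - k + 1` windows of `k` consecutive vertices: each window contains at
least `(k + 2) / 2` vertices of `W`, while each vertex lies in at most `k` windows. Hence
`(n - k + 1) (k + 2) ≤ 2 k |W|`, and `(n - k + 1) (k + 2) > n k` rearranges to `2 n > k² + k - 2`.
-/

open Finset

namespace Finset

theorem card_filter_mem_Ico_le (s : Finset ℕ) (j k : ℕ) : #{i ∈ s | j ∈ Ico i (i + k)} ≤ k :=
  calc #{i ∈ s | j ∈ Ico i (i + k)}
      ≤ #(Ico (j + 1 - k) (j + 1)) := card_le_card fun i hi ↦ by simp at hi ⊢; omega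
    _ ≤ k := by simp; omega

theorem sum_card_inter_Ico_le (S : Finset ℕ) (m k : ℕ) :
    ∑ i ∈ range m, #(S ∩ Ico i (i + k)) ≤ #S * k := by
  refine le_trans ?_ (S.sum_le_card_nsmul _ _ fun j _ ↦ card_filter_mem_Ico_le (range m) j k)
  simp_rw [← filter_mem_eq_inter, card_eq_sum_ones, sum_filter]
  exact sum_comm.le

theorem lt_two_mul_card_of_two_mul_card_inter_Ico {S : Finset ℕ} {n k : ℕ}
    (hn : k ^ 2 + k - 2 < 2 * n) (hS : ∀ i, i + k ≤ n → k + 2 ≤ 2 * #(S ∩ Ico i (i + k))) :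
    n < 2 * #S := by
  have hkn : k ≤ n := by
    rcases Nat.lt_or_ge k 2 with hk | hk
    · omega
    · nlinarith [Nat.sub_add_cancel (show 2 ≤ k ^ 2 + k by nlinarith)]
  have hwindows : (n - k + 1) * (k + 2) ≤ 2 * (#S * k) :=
    calc (n - k + 1) * (k + 2) = ∑ _i ∈ range (n - k + 1), (k + 2) := by simp
      _ ≤ ∑ i ∈ range (n - k + 1), 2 * #(S ∩ Ico i (i + k)) :=
        sum_le_sum fun i hi ↦ hS i (by simp at hi; omega)
      _ ≤ 2 * (#S * k) := by
        rw [← mul_sum]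
        exact Nat.mul_le_mul_left 2 (sum_card_inter_Ico_le S _ k)
  have hcount : n * k < (n - k + 1) * (k + 2) := by
    obtain ⟨a, rfl⟩ := Nat.exists_eq_add_of_le hkn
    have : k ^ 2 + k < 2 * (k + a) + 2 := by omega
    rw [Nat.add_sub_cancel_left]
    nlinarith
  exact Nat.lt_of_mul_lt_mul_right (a := k) (by linarith)

theorem card_image_inter_eq_card_preimage_inter {α β : Type*} [DecidableEq α] [DecidableEq β]
    {v : α → β} (hv : Function.Injective v) (s : Finset α) (W : Finset β) :
    #(s.image v ∩ W) = #(W.preimage v hv.injOn ∩ s) := by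
  rw [← filter_mem_eq_inter, filter_image, card_image_of_injective _ hv, ← filter_mem_eq_inter]
  congr 1
  ext
  simp [and_comm]

end Finset

theorem image_Ico_mem_tightPathEdges {V : Type*} [DecidableEq V] (v : ℕ → V) {n k i : ℕ}
    (hi : i + k ≤ n) : (Ico i (i + k)).image v ∈ tightPathEdges v n k :=
  mem_image.2 ⟨i, mem_range.2 (by omega), rfl⟩

theorem tight_path_intersecting_set_half_general {V : Type*} [DecidableEq V] (v : ℕ → V)
    (hv : Function.Injective v) (n k : ℕ)
    (hn : k ^ 2 + k - 2 < 2 * n) (W : Finset V)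
    (hW : ∀ e ∈ tightPathEdges v n k, ((k : ℝ) + 1) / 2 < ((e ∩ W).card : ℝ)) :
    (n : ℝ) / 2 < (W.card : ℝ) := by
  set S := W.preimage v hv.injOn
  have hS : ∀ i, i + k ≤ n → k + 2 ≤ 2 * #(S ∩ Ico i (i + k)) := by
    intro i hi
    have h := hW _ (image_Ico_mem_tightPathEdges v hi)
    rw [card_image_inter_eq_card_preimage_inter hv] at h
    have : k + 1 < 2 * #(S ∩ Ico i (i + k)) := by
      exact_mod_cast (show (k : ℝ) + 1 < 2 * #(S ∩ Ico i (i + k)) by linarith)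
    omega
  have hSW : #S ≤ #W := card_le_card_of_injOn v (fun _ ha ↦ mem_preimage.1 ha) hv.injOn
  have hnS := lt_two_mul_card_of_two_mul_card_inter_Ico hn hS
  have : (n : ℝ) < 2 * #W := by exact_mod_cast (by omega : n < 2 * #W)
  linarith

/-- If every edge of a k-uniform tight path on n vertices meets W in more than (k+1)/2
vertices and n > (k² + k - 2)/2, then |W| > n/2. -/
theorem tight_path_intersecting_set_half {V : Type*} [DecidableEq V] (v : ℕ → V)
    (hv : Function.Injective v) (n k : ℕ) (hk : 2 ≤ k)
    (hn : k ^ 2 + k - 2 < 2 * n) (W : Finset V)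
    (hW : ∀ e ∈ tightPathEdges v n k, ((k : ℝ) + 1) / 2 < ((e ∩ W).card : ℝ)) :
    (n : ℝ) / 2 < (W.card : ℝ) :=
  tight_path_intersecting_set_half_general v hv n k hn W hW
end

section
/- Let G be a k-uniform hypergraph, let Z₁, Z₂ ⊆ E(G) be edge sets, let i ≥ 1, and set q(j) = (1 - 2^{-j})(k+1). Suppose e₁, e₂, z₁, z₂ are edges of G with z₁ ∈ Z₁, z₂ ∈ Z₂, |e₁ ∩ z₁| > q(i), |e₂ ∩ z₂| > q(i), and |e₁ ∩ e₂| ≥ k - 1. Then |z₁ ∩ z₂| > q(i-1). -/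
/-!
Since `e₁` and `e₂` share all but at most one vertex, `|e₂ ∩ z₁| ≥ |e₁ ∩ z₁| - 1 > q(i) - 1`.
Inclusion–exclusion inside the `k`-set `e₂` then gives
`|z₁ ∩ z₂| ≥ |e₂ ∩ z₁| + |e₂ ∩ z₂| - k > 2 q(i) - 1 - k = q(i - 1)`.
-/

namespace Finset

variable {α : Type*} [DecidableEq α]

theorem card_inter_le_card_inter_add_card_sdiff (s t u : Finset α) :
    #(s ∩ u) ≤ #(t ∩ u) + #(s \ t) := by
  calc #(s ∩ u) ≤ #(t ∩ u ∪ s \ t) := card_le_card fun x hx => by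
          simp only [mem_inter, mem_union, mem_sdiff] at hx ⊢
          tauto
    _ ≤ #(t ∩ u) + #(s \ t) := card_union_le _ _

theorem card_inter_add_card_inter_le (e a b : Finset α) :
    #(e ∩ a) + #(e ∩ b) ≤ #(a ∩ b) + #e := by
  have hinter : #(e ∩ a ∩ (e ∩ b)) ≤ #(a ∩ b) := card_le_card fun x hx => by
    simp only [mem_inter] at hx ⊢
    tauto
  have hunion : #(e ∩ a ∪ e ∩ b) ≤ #e := card_le_card (union_subset inter_subset_left inter_subset_left)
  have := card_union_add_card_inter (e ∩ a) (e ∩ b)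
  omega

end Finset

open Finset

theorem two_mul_threshold_sub {i : ℕ} (hi : 1 ≤ i) (x : ℝ) :
    2 * ((1 - 1 / 2 ^ i) * x) - x = (1 - 1 / 2 ^ (i - 1)) * x := by
  obtain ⟨j, rfl⟩ := Nat.exists_eq_add_of_le' hi
  simp only [Nat.add_sub_cancel, pow_succ]
  field_simp
  ring

theorem neighborhood_intersection_bound_general {V : Type*} [DecidableEq V]
    (G : Finset (Finset V)) (k i : ℕ) (hi : 1 ≤ i)
    (hunif : ∀ e ∈ G, e.card = k)
    (e₁ e₂ z₁ z₂ : Finset V) (he₁ : e₁ ∈ G) (he₂ : e₂ ∈ G)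
    (h₁ : (1 - 1 / 2 ^ i) * ((k : ℝ) + 1) < ((e₁ ∩ z₁).card : ℝ))
    (h₂ : (1 - 1 / 2 ^ i) * ((k : ℝ) + 1) < ((e₂ ∩ z₂).card : ℝ))
    (h₁₂ : k - 1 ≤ (e₁ ∩ e₂).card) :
    (1 - 1 / 2 ^ (i - 1)) * ((k : ℝ) + 1) < ((z₁ ∩ z₂).card : ℝ) := by
  have hsdiff : #(e₁ \ e₂) ≤ 1 := by
    have := card_sdiff_add_card_inter e₁ e₂
    have := hunif e₁ he₁
    omega
  have hshift : (#(e₁ ∩ z₁) : ℝ) ≤ #(e₂ ∩ z₁) + 1 := by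
    exact_mod_cast (card_inter_le_card_inter_add_card_sdiff e₁ e₂ z₁).trans (by omega)
  have hincl : (#(e₂ ∩ z₁) : ℝ) + #(e₂ ∩ z₂) ≤ #(z₁ ∩ z₂) + k := by
    exact_mod_cast hunif e₂ he₂ ▸ card_inter_add_card_inter_le e₂ z₁ z₂
  rw [← two_mul_threshold_sub hi]
  linarith

/-- If z₁ ∈ Z₁, z₂ ∈ Z₂ are edges with |e₁ ∩ z₁| > q(i), |e₂ ∩ z₂| > q(i) and
|e₁ ∩ e₂| ≥ k - 1, where q(j) = (1 - 2^{-j})(k+1), then |z₁ ∩ z₂| > q(i-1). -/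
theorem neighborhood_intersection_bound {V : Type*} [DecidableEq V]
    (G Z₁ Z₂ : Finset (Finset V)) (k i : ℕ) (hk : 2 ≤ k) (hi : 1 ≤ i)
    (hunif : ∀ e ∈ G, e.card = k) (hZ₁ : Z₁ ⊆ G) (hZ₂ : Z₂ ⊆ G)
    (e₁ e₂ z₁ z₂ : Finset V) (he₁ : e₁ ∈ G) (he₂ : e₂ ∈ G)
    (hz₁ : z₁ ∈ Z₁) (hz₂ : z₂ ∈ Z₂)
    (h₁ : (1 - 1 / 2 ^ i) * ((k : ℝ) + 1) < ((e₁ ∩ z₁).card : ℝ))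
    (h₂ : (1 - 1 / 2 ^ i) * ((k : ℝ) + 1) < ((e₂ ∩ z₂).card : ℝ))
    (h₁₂ : k - 1 ≤ (e₁ ∩ e₂).card) :
    (1 - 1 / 2 ^ (i - 1)) * ((k : ℝ) + 1) < ((z₁ ∩ z₂).card : ℝ) :=
  neighborhood_intersection_bound_general G k i hi hunif e₁ e₂ z₁ z₂ he₁ he₂ h₁ h₂ h₁₂
end

section
/- Let G be a k-uniform hypergraph, Z₁, Z₂ ⊆ E(G) edge sets with disjoint vertex covers (⋃Z₁ ∩ ⋃Z₂ = ∅), and i ≥ 1 an integer with q(j) = (1 - 2^{-j})(k+1). Then for any e₁ ∈ N_{>q(i)}(Z₁) and e₂ ∈ N_{>q(i)}(Z₂), we have |e₁ ∩ e₂| < k - 1. -/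
/-!
Suppose `e₁` meets `z₁ ∈ Z₁` and `e₂` meets `z₂ ∈ Z₂` in more than `q` vertices each. The edges
`z₁`, `z₂` are disjoint, so `e₁` splits its `k` vertices between them, and if `e₁`, `e₂` share
`k - 1` vertices then `e₂` has at most one vertex outside `e₁`. Hence
`2q < |e₁ ∩ z₁| + |e₂ ∩ z₂| ≤ |e₁ ∩ z₁| + |e₁ ∩ z₂| + 1 ≤ k + 1`, which fails once `q ≥ (k + 1) / 2`,
i.e. for `q = (1 - 2⁻ⁱ)(k + 1)` with `i ≥ 1`.
-/

open Finset

/-- The q-neighborhood of an edge set Z in the hypergraph G: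
all edges of G meeting some edge of Z in more than q vertices. -/
def qNeighborhood {V : Type*} [DecidableEq V] (G Z : Finset (Finset V)) (q : ℝ) :
    Set (Finset V) :=
  {e | e ∈ G ∧ ∃ z ∈ Z, q < ((e ∩ z).card : ℝ)}

section Counting

variable {V : Type*} [DecidableEq V]

theorem Finset.disjoint_of_mem_of_disjoint_biUnion {Z₁ Z₂ : Finset (Finset V)}
    {z₁ z₂ : Finset V} (hz₁ : z₁ ∈ Z₁) (hz₂ : z₂ ∈ Z₂)
    (hdisj : Disjoint (Z₁.biUnion id) (Z₂.biUnion id)) : Disjoint z₁ z₂ :=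
  hdisj.mono (subset_biUnion_of_mem id hz₁) (subset_biUnion_of_mem id hz₂)

theorem Finset.card_inter_add_card_inter_le_of_disjoint {e a b : Finset V}
    (hab : Disjoint a b) : #(e ∩ a) + #(e ∩ b) ≤ #e := by
  rw [← card_union_of_disjoint (hab.mono inter_subset_right inter_subset_right)]
  exact card_le_card (union_subset inter_subset_left inter_subset_left)

theorem Finset.card_inter_le_card_inter_add_card_sdiff_s11 (s t u : Finset V) :
    #(t ∩ u) ≤ #(s ∩ u) + #(t \ s) := by
  refine (card_le_card fun v hv ↦ ?_).trans (card_union_le _ _)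
  rw [mem_inter] at hv
  by_cases hvs : v ∈ s
  · exact mem_union_left _ (mem_inter.2 ⟨hvs, hv.2⟩)
  · exact mem_union_right _ (mem_sdiff.2 ⟨hv.1, hvs⟩)

theorem Finset.card_inter_add_card_inter_le_of_le_card_inter {k : ℕ} {e₁ e₂ z₁ z₂ : Finset V}
    (he₁ : #e₁ = k) (he₂ : #e₂ = k) (hz : Disjoint z₁ z₂) (h : k - 1 ≤ #(e₁ ∩ e₂)) :
    #(e₁ ∩ z₁) + #(e₂ ∩ z₂) ≤ k + 1 := by
  have hsdiff : #(e₂ \ e₁) ≤ 1 := by rw [card_sdiff]; omega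
  have := card_inter_le_card_inter_add_card_sdiff_s11 e₁ e₂ z₂
  have := card_inter_add_card_inter_le_of_disjoint (e := e₁) hz
  omega

end Counting

theorem le_two_mul_one_sub_inv_two_pow_mul {i : ℕ} (hi : 1 ≤ i) {x : ℝ} (hx : 0 ≤ x) :
    x ≤ 2 * ((1 - 1 / 2 ^ i) * x) := by
  have : (1 : ℝ) / 2 ^ i ≤ 1 / 2 := by
    gcongr
    exact le_self_pow₀ one_le_two (by omega)
  nlinarith

theorem neighborhoods_nearly_disjoint_general {V : Type*} [DecidableEq V]
    (G Z₁ Z₂ : Finset (Finset V)) (k i : ℕ) (hi : 1 ≤ i)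
    (hunif : ∀ e ∈ G, e.card = k)
    (hdisj : Disjoint (Z₁.biUnion id) (Z₂.biUnion id))
    (e₁ e₂ : Finset V)
    (he₁ : e₁ ∈ qNeighborhood G Z₁ ((1 - 1 / 2 ^ i) * ((k : ℝ) + 1)))
    (he₂ : e₂ ∈ qNeighborhood G Z₂ ((1 - 1 / 2 ^ i) * ((k : ℝ) + 1))) :
    (e₁ ∩ e₂).card < k - 1 := by
  obtain ⟨he₁G, z₁, hz₁, hq₁⟩ := he₁
  obtain ⟨he₂G, z₂, hz₂, hq₂⟩ := he₂
  by_contra! h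
  have hsum : ((#(e₁ ∩ z₁) + #(e₂ ∩ z₂) : ℕ) : ℝ) ≤ k + 1 := by
    exact_mod_cast card_inter_add_card_inter_le_of_le_card_inter (hunif e₁ he₁G) (hunif e₂ he₂G)
      (disjoint_of_mem_of_disjoint_biUnion hz₁ hz₂ hdisj) h
  have hq := le_two_mul_one_sub_inv_two_pow_mul hi (x := (k : ℝ) + 1) (by positivity)
  push_cast at hsum
  linarith

/-- If Z₁, Z₂ have disjoint vertex covers, then edges of the q(i)-neighborhoods of Z₁ and
Z₂ intersect in fewer than k - 1 vertices, where q(i) = (1 - 2^{-i})(k+1). -/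
theorem neighborhoods_nearly_disjoint {V : Type*} [DecidableEq V]
    (G Z₁ Z₂ : Finset (Finset V)) (k i : ℕ) (hk : 2 ≤ k) (hi : 1 ≤ i)
    (hunif : ∀ e ∈ G, e.card = k) (hZ₁ : Z₁ ⊆ G) (hZ₂ : Z₂ ⊆ G)
    (hdisj : Disjoint (Z₁.biUnion id) (Z₂.biUnion id))
    (e₁ e₂ : Finset V)
    (he₁ : e₁ ∈ qNeighborhood G Z₁ ((1 - 1 / 2 ^ i) * ((k : ℝ) + 1)))
    (he₂ : e₂ ∈ qNeighborhood G Z₂ ((1 - 1 / 2 ^ i) * ((k : ℝ) + 1))) :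
    (e₁ ∩ e₂).card < k - 1 :=
  neighborhoods_nearly_disjoint_general G Z₁ Z₂ k i hi hunif hdisj e₁ e₂ he₁ he₂
end
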